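/- arXiv:2504.10719 — 3 statements merged into one kernel-verified Lean document; each statement's English description precedes it below -/
import Mathlib

section
/- Let f, g be probability densities on ℝ^d and p ∈ (0,1), q = 1-p. If δ(f,g,p) = pq, where δ(f,g,p) = pq ∫ f(x)g(x)/(pf(x)+qg(x)) dx, then f = g almost everywhere. -/
/-!
Since `(q a + p b)(p a + q b) - a b = p q (a - b)²` when `p + q = 1`, the integrand
`f g / (p f + q g)` is dominated pointwise by `q f + p g`, with equality only where `f = g`.
Both sides integrate to `1`, so the nonnegative gap vanishes almost everywhere.
-/

open MeasureTheory

section WeightedSum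

variable {p q a b : ℝ}

lemma weighted_sum_sub_mul_div_eq (hpq : p + q = 1) (hD : p * a + q * b ≠ 0) :
    q * a + p * b - a * b / (p * a + q * b) = p * q * (a - b) ^ 2 / (p * a + q * b) := by
  rw [eq_div_iff hD, sub_mul, div_mul_cancel₀ _ hD, ← sub_eq_zero]
  linear_combination a * b * (p + q + 1) * hpq

lemma mul_div_weighted_sum_le (hp : 0 ≤ p) (hq : 0 ≤ q) (hpq : p + q = 1)
    (ha : 0 ≤ a) (hb : 0 ≤ b) : a * b / (p * a + q * b) ≤ q * a + p * b := by
  rcases (by positivity : 0 ≤ p * a + q * b).eq_or_lt with hD | hD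
  · rw [← hD, div_zero]
    positivity
  · have hgap := weighted_sum_sub_mul_div_eq hpq hD.ne'
    have : 0 ≤ p * q * (a - b) ^ 2 / (p * a + q * b) := by positivity
    linarith

lemma eq_of_mul_div_weighted_sum_eq (hp : 0 < p) (hq : 0 < q) (hpq : p + q = 1)
    (ha : 0 ≤ a) (hb : 0 ≤ b) (h : a * b / (p * a + q * b) = q * a + p * b) : a = b := by
  rcases (by positivity : 0 ≤ p * a + q * b).eq_or_lt with hD | hD
  · have ha0 : a = 0 := by nlinarith
    have hb0 : b = 0 := by nlinarith
    rw [ha0, hb0]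
  · have hgap := weighted_sum_sub_mul_div_eq hpq hD.ne'
    rw [h, sub_self, eq_comm, div_eq_zero_iff, or_iff_left hD.ne', mul_eq_zero,
      or_iff_right (by positivity), sq_eq_zero_iff, sub_eq_zero] at hgap
    exact hgap

end WeightedSum

section Integral

variable {α : Type*} [MeasurableSpace α] {μ : Measure α} {f g : α → ℝ} {p q : ℝ}

lemma integrable_mul_div_weighted_sum (hp : 0 ≤ p) (hq : 0 ≤ q) (hpq : p + q = 1)
    (hf0 : ∀ x, 0 ≤ f x) (hg0 : ∀ x, 0 ≤ g x) (hf : Integrable f μ) (hg : Integrable g μ) :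
    Integrable (fun x ↦ f x * g x / (p * f x + q * g x)) μ := by
  refine Integrable.mono' ((hf.const_mul q).add (hg.const_mul p)) ?_ (ae_of_all _ fun x ↦ ?_)
  · exact ((hf.1.aemeasurable.mul hg.1.aemeasurable).div
      ((hf.1.aemeasurable.const_mul p).add (hg.1.aemeasurable.const_mul q))).aestronglyMeasurable
  · have := hf0 x
    have := hg0 x
    rw [Real.norm_of_nonneg (by positivity)]
    exact mul_div_weighted_sum_le hp hq hpq (hf0 x) (hg0 x)

theorem ae_eq_of_integral_mul_div_weighted_sum_eq (hp : 0 < p) (hq : 0 < q) (hpq : p + q = 1)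
    (hf0 : ∀ x, 0 ≤ f x) (hg0 : ∀ x, 0 ≤ g x) (hf : Integrable f μ) (hg : Integrable g μ)
    (h : ∫ x, f x * g x / (p * f x + q * g x) ∂μ = q * (∫ x, f x ∂μ) + p * ∫ x, g x ∂μ) :
    f =ᵐ[μ] g := by
  have hsum : Integrable (fun x ↦ q * f x + p * g x) μ := (hf.const_mul q).add (hg.const_mul p)
  rw [← integral_const_mul, ← integral_const_mul, ← integral_add (hf.const_mul q) (hg.const_mul p),
    integral_eq_iff_of_ae_le (integrable_mul_div_weighted_sum hp.le hq.le hpq hf0 hg0 hf hg) hsum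
      (ae_of_all _ fun x ↦ mul_div_weighted_sum_le hp.le hq.le hpq (hf0 x) (hg0 x))] at h
  filter_upwards [h] with x hx
  exact eq_of_mul_div_weighted_sum_eq hp hq hpq (hf0 x) (hg0 x) hx

end Integral

theorem henze_penrose_eq_iff_general (d : ℕ) (f g : EuclideanSpace ℝ (Fin d) → ℝ)
    (hf0 : ∀ x, 0 ≤ f x) (hg0 : ∀ x, 0 ≤ g x)
    (hf1 : ∫ x, f x = 1) (hg1 : ∫ x, g x = 1)
    (p : ℝ) (hp : p ∈ Set.Ioo (0 : ℝ) 1) (q : ℝ) (hq : q = 1 - p)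
    (heq : p * q * ∫ x, f x * g x / (p * f x + q * g x) = p * q) :
    f =ᵐ[volume] g := by
  obtain ⟨hp0, hp1⟩ := hp
  have hq0 : 0 < q := by linarith
  have hpq : p + q = 1 := by linarith
  have hint : ∫ x, f x * g x / (p * f x + q * g x) = q * (∫ x, f x) + p * ∫ x, g x := by
    rw [hf1, hg1, mul_one, mul_one, add_comm, hpq]
    exact mul_left_cancel₀ (by positivity) (heq.trans (mul_one _).symm)
  exact ae_eq_of_integral_mul_div_weighted_sum_eq hp0 hq0 hpq hf0 hg0
    (integrable_of_integral_eq_one hf1) (integrable_of_integral_eq_one hg1) hint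

/-- Equality case of the Henze–Penrose inequality: if `pq ∫ f g/(pf+qg) = pq`
for densities `f, g` on `ℝ^d`, then `f = g` almost everywhere. -/
theorem henze_penrose_eq_iff (d : ℕ) (f g : EuclideanSpace ℝ (Fin d) → ℝ)
    (hf : Measurable f) (hg : Measurable g)
    (hf0 : ∀ x, 0 ≤ f x) (hg0 : ∀ x, 0 ≤ g x)
    (hf1 : ∫ x, f x = 1) (hg1 : ∫ x, g x = 1)
    (p : ℝ) (hp : p ∈ Set.Ioo (0 : ℝ) 1) (q : ℝ) (hq : q = 1 - p)
    (heq : p * q * ∫ x, f x * g x / (p * f x + q * g x) = p * q) :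
    f =ᵐ[volume] g :=
  henze_penrose_eq_iff_general d f g hf0 hg0 hf1 hg1 p hp q hq heq
end

section
/- Let x ∈ ℝ^d be nonzero and 0 < θ ≤ π/6, and let C(x,θ) = {0} ∪ {y : arccos(⟨x,y⟩/(‖x‖‖y‖)) ≤ θ} be the cone of angle θ around x. Then for any y₁, y₂ ∈ C(x,θ) with ‖y₁‖ ≤ ‖y₂‖, one has ‖y₁ - y₂‖ ≤ ‖y₂‖. -/
open scoped RealInnerProductSpace
open InnerProductGeometry

/-! Any two nonzero vectors of the cone make an angle at most `2θ ≤ π/3` (triangle inequality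
for angles through `x`), so `⟪y₁, y₂⟫ ≥ ‖y₁‖ ‖y₂‖ / 2` and
`‖y₁ - y₂‖² ≤ ‖y₁‖² - ‖y₁‖ ‖y₂‖ + ‖y₂‖² ≤ ‖y₂‖²`. -/

theorem half_mul_norm_le_inner_of_angle_le_pi_div_three {V : Type*} [NormedAddCommGroup V]
    [InnerProductSpace ℝ V] {y₁ y₂ : V} (hangle : angle y₁ y₂ ≤ Real.pi / 3) :
    ‖y₁‖ * ‖y₂‖ / 2 ≤ ⟪y₁, y₂⟫ := by
  have hcos : 1 / 2 ≤ Real.cos (angle y₁ y₂) := by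
    rw [← Real.cos_pi_div_three]
    exact Real.cos_le_cos_of_nonneg_of_le_pi (angle_nonneg y₁ y₂)
      (by linarith [Real.pi_pos]) hangle
  rw [← cos_angle_mul_norm_mul_norm]
  nlinarith [mul_nonneg (norm_nonneg y₁) (norm_nonneg y₂)]

theorem norm_sub_le_of_angle_le_pi_div_three {V : Type*} [NormedAddCommGroup V]
    [InnerProductSpace ℝ V] {y₁ y₂ : V} (hangle : angle y₁ y₂ ≤ Real.pi / 3)
    (hnorm : ‖y₁‖ ≤ ‖y₂‖) : ‖y₁ - y₂‖ ≤ ‖y₂‖ := by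
  have hinner := half_mul_norm_le_inner_of_angle_le_pi_div_three hangle
  have hsq : ‖y₁ - y₂‖ ^ 2 ≤ ‖y₂‖ ^ 2 := by
    rw [norm_sub_sq_real]
    nlinarith [norm_nonneg y₁]
  exact (pow_le_pow_iff_left₀ (norm_nonneg _) (norm_nonneg _) two_ne_zero).mp hsq

theorem cone_lemma_general (d : ℕ) (x : EuclideanSpace ℝ (Fin d))
    (θ : ℝ) (hθ : θ ≤ Real.pi / 6)
    (y₁ y₂ : EuclideanSpace ℝ (Fin d))
    (hy₁ : y₁ = 0 ∨ Real.arccos (⟪x, y₁⟫ / (‖x‖ * ‖y₁‖)) ≤ θ)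
    (hy₂ : y₂ = 0 ∨ Real.arccos (⟪x, y₂⟫ / (‖x‖ * ‖y₂‖)) ≤ θ)
    (hnorm : ‖y₁‖ ≤ ‖y₂‖) :
    ‖y₁ - y₂‖ ≤ ‖y₂‖ := by
  rcases hy₁ with rfl | hangle₁
  · simp
  rcases hy₂ with rfl | hangle₂
  · simp_all
  apply norm_sub_le_of_angle_le_pi_div_three _ hnorm
  calc angle y₁ y₂ ≤ angle y₁ x + angle x y₂ := angle_le_angle_add_angle y₁ x y₂
    _ = angle x y₁ + angle x y₂ := by rw [angle_comm]
    _ ≤ Real.pi / 3 := by unfold angle; linarith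

/-- Cone lemma: if `y₁, y₂` lie in the cone of angle `θ ≤ π/6` around a nonzero `x`
and `‖y₁‖ ≤ ‖y₂‖`, then `‖y₁ - y₂‖ ≤ ‖y₂‖`. -/
theorem cone_lemma (d : ℕ) (x : EuclideanSpace ℝ (Fin d)) (hx : x ≠ 0)
    (θ : ℝ) (hθ0 : 0 < θ) (hθ : θ ≤ Real.pi / 6)
    (y₁ y₂ : EuclideanSpace ℝ (Fin d))
    (hy₁ : y₁ = 0 ∨ Real.arccos (⟪x, y₁⟫ / (‖x‖ * ‖y₁‖)) ≤ θ)
    (hy₂ : y₂ = 0 ∨ Real.arccos (⟪x, y₂⟫ / (‖x‖ * ‖y₂‖)) ≤ θ)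
    (hnorm : ‖y₁‖ ≤ ‖y₂‖) :
    ‖y₁ - y₂‖ ≤ ‖y₂‖ :=
  cone_lemma_general d x θ hθ y₁ y₂ hy₁ hy₂ hnorm
end

section
/- Let S ⊂ ℝ^d be compact and convex with S equal to the closure of its interior, and fix R > 0. Then there exists M > 0 such that for every x ∈ S and every θ ∈ [0,1], the Lebesgue measure of S ∩ B(x, Rθ) is at least M θ^d. -/
/-!
Shrinking `s ∩ B(x, r)` towards `x ∈ s` by the factor `θ` lands, by convexity, in
`s ∩ B(x, rθ)`, so `λ(s ∩ B(x, rθ)) ≥ θ^d λ(s ∩ B(x, r))`. Taking `r` larger than the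
diameter of `s` makes `s ∩ B(x, r) = s`, whose volume is positive because `s` has nonempty
interior; this gives a lower bound uniform in `x`.
-/

open MeasureTheory Metric Module AffineMap

section

variable {E : Type*} [NormedAddCommGroup E] [NormedSpace ℝ E] {s : Set E} {x : E}

theorem Convex.image_homothety_inter_ball_subset (hs : Convex ℝ s) (hx : x ∈ s) {θ : ℝ}
    (hθ0 : 0 < θ) (hθ1 : θ ≤ 1) (r : ℝ) :
    homothety x θ '' (s ∩ ball x r) ⊆ s ∩ ball x (r * θ) := by
  rintro _ ⟨y, ⟨hys, hyr⟩, rfl⟩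
  refine ⟨?_, ?_⟩
  · rw [homothety_eq_lineMap]
    exact hs.lineMap_mem hx hys ⟨hθ0.le, hθ1⟩
  · rw [mem_ball, dist_homothety_center, Real.norm_of_nonneg hθ0.le, dist_comm, mul_comm r]
    exact mul_lt_mul_of_pos_left (mem_ball.1 hyr) hθ0

variable [MeasurableSpace E] [BorelSpace E] [FiniteDimensional ℝ E]
  (μ : Measure E) [μ.IsAddHaarMeasure]

theorem Convex.ofReal_pow_mul_addHaar_inter_ball_le (hs : Convex ℝ s) (hx : x ∈ s) {θ : ℝ}
    (hθ0 : 0 < θ) (hθ1 : θ ≤ 1) (r : ℝ) :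
    ENNReal.ofReal (θ ^ finrank ℝ E) * μ (s ∩ ball x r) ≤ μ (s ∩ ball x (r * θ)) := by
  rw [← abs_of_pos (pow_pos hθ0 _), ← Measure.addHaar_image_homothety]
  exact measure_mono (hs.image_homothety_inter_ball_subset hx hθ0 hθ1 r)

theorem Convex.ofReal_pow_mul_addHaar_le_addHaar_inter_ball (hs : Convex ℝ s) (hx : x ∈ s)
    {ρ : ℝ} (hsρ : s ⊆ ball x ρ) {θ : ℝ} (hθ0 : 0 < θ) (hθ1 : θ ≤ 1) :
    ENNReal.ofReal (θ ^ finrank ℝ E) * μ s ≤ μ (s ∩ ball x (ρ * θ)) := by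
  simpa only [Set.inter_eq_left.2 hsρ] using
    hs.ofReal_pow_mul_addHaar_inter_ball_le μ hx hθ0 hθ1 ρ

end

/-- For a compact convex `S ⊆ ℝ^d` equal to the closure of its interior and any `R > 0`,
there is `M > 0` with `λ(S ∩ B(x, Rθ)) ≥ M θ^d` for all `x ∈ S` and `θ ∈ [0,1]`. -/
theorem convex_ball_volume_lower_bound (d : ℕ) (hd : 1 ≤ d)
    (S : Set (EuclideanSpace ℝ (Fin d))) (hScompact : IsCompact S) (hSconv : Convex ℝ S)
    (hSint : S = closure (interior S)) (R : ℝ) (hR : 0 < R) :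
    ∃ M : ℝ, 0 < M ∧ ∀ x ∈ S, ∀ θ ∈ Set.Icc (0 : ℝ) 1,
      M * θ ^ d ≤ (volume (S ∩ ball x (R * θ))).toReal := by
  rcases S.eq_empty_or_nonempty with rfl | hne
  · exact ⟨1, one_pos, by simp⟩
  have hvol_pos : 0 < volume S := Measure.measure_pos_of_nonempty_interior _
    (closure_nonempty_iff.1 (hSint ▸ hne))
  have hvol_ne_top : volume S ≠ ⊤ := hScompact.measure_lt_top.ne
  set ρ := diam S + 1
  have hρ : 0 < ρ := by positivity
  have hSρ : ∀ x ∈ S, S ⊆ ball x ρ := fun x hx y hy =>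
    mem_ball.2 ((dist_le_diam_of_mem hScompact.isBounded hy hx).trans_lt (lt_add_one _))
  set m := min 1 (R / ρ)
  have hm : 0 < m := lt_min one_pos (div_pos hR hρ)
  refine ⟨m ^ d * (volume S).toReal,
    mul_pos (pow_pos hm d) (ENNReal.toReal_pos hvol_pos.ne' hvol_ne_top),
    fun x hx θ ⟨hθ0, hθ1⟩ => ?_⟩
  rcases hθ0.eq_or_lt with rfl | hθ
  · simp [zero_pow (Nat.one_le_iff_ne_zero.1 hd)]
  rw [← ENNReal.ofReal_le_iff_le_toReal
    (measure_ne_top_of_subset Set.inter_subset_left hvol_ne_top)]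
  calc ENNReal.ofReal (m ^ d * (volume S).toReal * θ ^ d)
      = ENNReal.ofReal ((θ * m) ^ finrank ℝ (EuclideanSpace ℝ (Fin d))) * volume S := by
        rw [finrank_euclideanSpace_fin, ← ENNReal.ofReal_toReal hvol_ne_top,
          ← ENNReal.ofReal_mul (by positivity), ENNReal.ofReal_toReal hvol_ne_top]
        ring_nf
    _ ≤ volume (S ∩ ball x (ρ * (θ * m))) :=
        hSconv.ofReal_pow_mul_addHaar_le_addHaar_inter_ball _ hx (hSρ x hx) (by positivity)
          (mul_le_one₀ hθ1 hm.le (min_le_left _ _))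
    _ ≤ volume (S ∩ ball x (R * θ)) := by
        refine measure_mono (Set.inter_subset_inter_right _ (ball_subset_ball ?_))
        calc ρ * (θ * m) = θ * (ρ * m) := by ring
          _ ≤ θ * R := by gcongr; exact (le_div_iff₀' hρ).1 (min_le_right _ _)
          _ = R * θ := mul_comm _ _
end
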